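/- arXiv:1908.10805 — 2 statements merged into one kernel-verified Lean document; each statement's English description precedes it below -/
import Mathlib

section
/- Let ψ : ℕ → ℕ be defined by ψ(n) = max over all x with 2^n ≤ x < 2^{n+1} of the least k such that Code.evaln k (Code.ofNatCode (K x)) 0 = some x. If there exists a computable function g : ℕ → ℕ with ψ(n) ≤ g(n) for all n, then the Kolmogorov complexity function K : ℕ → ℕ is computable. -/
open scoped Classical
open Nat.Partrec Nat.Partrec.Code

theorem K_exists (x : ℕ) : ∃ e : ℕ, (Code.ofNatCode e).eval 0 = Part.some x :=
  ⟨Code.encodeCode (Code.const x), by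
    rw [← Code.encodeCode_eq, ← Code.ofNatCode_eq, Denumerable.ofNat_encode]
    exact Code.eval_const x 0⟩

/-- Kolmogorov complexity: the least index `e` such that program `e` on input `0` outputs `x`. -/
noncomputable def K (x : ℕ) : ℕ := Nat.find (K_exists x)

theorem T_exists (x : ℕ) : ∃ k : ℕ, Code.evaln k (Code.ofNatCode (K x)) 0 = some x := by
  have h : x ∈ (Code.ofNatCode (K x)).eval 0 := by
    have := Nat.find_spec (K_exists x)
    rw [show K x = Nat.find (K_exists x) from rfl, this]
    exact Part.mem_some x
  obtain ⟨k, hk⟩ := Code.evaln_complete.mp h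
  exact ⟨k, hk⟩

/-- The running time of the shortest program for `x`. -/
noncomputable def T (x : ℕ) : ℕ := Nat.find (T_exists x)

/-- `ψ n` : the maximal running time of a shortest program, over strings of length `n`. -/
noncomputable def ψ (n : ℕ) : ℕ := (Finset.Ico (2 ^ n) (2 ^ (n + 1))).sup T

/-!
A computable bound `t x ≥ T x` on the running time of a shortest program for `x` makes `K`
computable: `K x` is the first index `e` such that program `e` outputs `x` within `t x` steps,
a decidable condition, so unbounded search finds it. Since a string `x` has length `log₂ x`,
`t x := g (log₂ x) + T 0` is such a bound.
-/

theorem Primrec.nat_log (b : ℕ) : Primrec (Nat.log b) := by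
  rcases le_or_gt b 1 with hb | hb
  · exact (Primrec.const 0).of_eq fun x => (Nat.log_of_left_le_one hb x).symm
  have hpow : PrimrecRel fun x n : ℕ => b ^ n ≤ x :=
    Primrec.nat_le.comp ((Primrec₂.unpaired'.1 Nat.Primrec.pow).comp (Primrec.const b)
      Primrec.snd) Primrec.fst
  refine (Primrec.nat_findGreatest Primrec.id hpow).of_eq fun x => Nat.findGreatest_eq_iff.2
    ⟨Nat.log_le_self b x, fun h => Nat.pow_log_le_self b ?_, fun n hn _ => ?_⟩
  · rintro rfl
    exact h (Nat.log_zero_right b)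
  · exact not_le.2 (Nat.lt_pow_of_log_lt hb hn)

theorem T_le_ψ_log {x : ℕ} (hx : x ≠ 0) : T x ≤ ψ (Nat.log 2 x) :=
  Finset.le_sup (Finset.mem_Ico.2 ⟨Nat.pow_log_le_self 2 hx, Nat.lt_pow_succ_log_self one_lt_two x⟩)

theorem evaln_K_of_T_le {x t : ℕ} (h : T x ≤ t) : evaln t (ofNatCode (K x)) 0 = some x :=
  evaln_mono h (Nat.find_spec (T_exists x))

theorem K_le_of_evaln {x t e : ℕ} (h : evaln t (ofNatCode e) 0 = some x) : K x ≤ e :=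
  Nat.find_min' (K_exists x) (Part.eq_some_iff.2 (evaln_sound h))

theorem computablePred_evaln_eq_some {t : ℕ → ℕ} (ht : Computable t) :
    ComputablePred fun p : ℕ × ℕ => evaln (t p.1) (ofNatCode p.2) 0 = some p.1 := by
  have hevaln : Computable fun p : ℕ × ℕ => evaln (t p.1) (ofNatCode p.2) 0 := by
    rw [← ofNatCode_eq]
    exact primrec_evaln.to_comp.comp (((ht.comp .fst).pair ((Computable.ofNat Code).comp .snd)).pair
      (Computable.const 0))
  exact ComputablePred.computable_iff.2
    ⟨_, Primrec.eq.decide.to_comp.comp hevaln (Computable.option_some.comp .fst), by simp⟩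

theorem K_computable_of_computable_T_bound (t : ℕ → ℕ) (ht : Computable t)
    (hT : ∀ x, T x ≤ t x) : Computable K := by
  have hfound : ∀ x, ∃ e, evaln (t x) (ofNatCode e) 0 = some x :=
    fun x => ⟨K x, evaln_K_of_T_le (hT x)⟩
  refine (Computable.find (computablePred_evaln_eq_some ht) hfound).of_eq fun x => ?_
  exact le_antisymm (Nat.find_min' _ (evaln_K_of_T_le (hT x)))
    (K_le_of_evaln (Nat.find_spec (hfound x)))

theorem K_computable_of_computable_bound_on_psi
    (g : ℕ → ℕ) (hg : Computable g) (hbound : ∀ n : ℕ, ψ n ≤ g n) :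
    Computable K := by
  -- `x = 0` is not a binary string of any length, so `ψ` does not bound `T 0`.
  refine K_computable_of_computable_T_bound (fun x => g (Nat.log 2 x) + T 0)
    (Primrec.nat_add.to_comp.comp (hg.comp (Primrec.nat_log 2).to_comp) (Computable.const _))
    fun x => ?_
  rcases eq_or_ne x 0 with rfl | hx
  · exact Nat.le_add_left _ _
  · exact (T_le_ψ_log hx).trans ((hbound _).trans (Nat.le_add_right _ _))
end

section
/- The Kolmogorov complexity function K : ℕ → ℕ, assigning to each x the least e such that (Code.ofNatCode e).eval 0 = Part.some x, is not computable. -/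
open scoped Classical
open Nat.Partrec Nat.Partrec.Code

theorem K_spec (x : ℕ) : (Code.ofNatCode (K x)).eval 0 = Part.some x :=
  Nat.find_spec (K_exists x)

theorem K_le_encode {c : Code} {x : ℕ} (h : c.eval 0 = Part.some x) : K x ≤ Encodable.encode c :=
  Nat.find_min' (K_exists x) <| by rwa [← Code.ofNatCode_eq, Denumerable.ofNat_encode]

theorem K_injective : Function.Injective K := fun x y h =>
  Part.some_inj.mp <| (K_spec x).symm.trans (h ▸ K_spec y)

theorem exists_lt_K (n : ℕ) : ∃ x, n < K x :=
  (K_injective.nat_tendsto_atTop.eventually_gt_atTop n).exists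

theorem Computable.find_lt_apply {f : ℕ → ℕ} (hf : Computable f) (H : ∀ n, ∃ x, n < f x) :
    Computable fun n => Nat.find (H n) :=
  Computable.find (Primrec.nat_lt.decide.to_comp.comp Computable.fst
    (hf.comp Computable.snd)).computablePred H

theorem Nat.Partrec.Code.exists_eval_eq_some_apply_encode {g : ℕ → ℕ} (hg : Computable g) :
    ∃ c : Code, ∀ n, c.eval n = Part.some (g (Encodable.encode c)) := by
  have hf : Partrec₂ fun (c : Code) (_ : ℕ) => Part.some (g (Encodable.encode c)) :=
    (hg.comp (Computable.encode.comp Computable.fst)).partrec.to₂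
  obtain ⟨c, hc⟩ := fixed_point₂ hf
  exact ⟨c, congrFun hc⟩

theorem K_not_computable : ¬ Computable K := by
  intro hK
  obtain ⟨c, hc⟩ := Code.exists_eval_eq_some_apply_encode (hK.find_lt_apply exists_lt_K)
  have hle := K_le_encode (hc 0)
  have hlt := Nat.find_spec (exists_lt_K (Encodable.encode c))
  omega
end
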